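/- arXiv:2003.11311 — 4 statements merged into one kernel-verified Lean document; each statement's English description precedes it below -/
import Mathlib

section
/- Let μ : 𝔜 → ℂ be a finitely additive complex set function on the cylinder-set algebra 𝔜 of Ω, and equip Ω with the σ-algebra 𝔖 generated by 𝔜. Then μ admits a (necessarily unique) extension to a countably additive complex measure on 𝔖 if and only if μ is of bounded variation. -/
open MeasureTheory Filter Finset

attribute [local instance] Classical.propDecidable

noncomputable section

/-- A relation on ℕ representing a naturally labelled past-finite causal set:
a strict partial order `r` with `r i j → i < j`. -/
def CausalRel (r : ℕ → ℕ → Prop) : Prop :=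
  (∀ i, ¬ r i i) ∧ (∀ i j k, r i j → r j k → r i k) ∧ (∀ i j, r i j → i < j)

/-- Ω, the sample space of naturally labelled past-finite causal sets. -/
def Omega : Type := {r : ℕ → ℕ → Prop // CausalRel r}

/-- An `n`-node: a strict partial order on `Fin n` compatible with the labelling. -/
def IsNode {n : ℕ} (p : Fin n → Fin n → Prop) : Prop :=
  (∀ i, ¬ p i i) ∧ (∀ i j k, p i j → p j k → p i k) ∧
    (∀ i j : Fin n, p i j → (i : ℕ) < (j : ℕ))

/-- The cylinder set of an `n`-node. -/
def Cyl {n : ℕ} (p : Fin n → Fin n → Prop) : Set Omega :=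
  {r | ∀ i j : Fin n, r.1 i.1 j.1 ↔ p i j}

/-- The Boolean set algebra 𝔜 generated by the cylinder sets (and Ω itself) under
finite unions, intersections and complements. -/
inductive InAlg : Set Omega → Prop
  | basic {n : ℕ} (hn : 1 ≤ n) (p : Fin n → Fin n → Prop) (hp : IsNode p) : InAlg (Cyl p)
  | univ : InAlg Set.univ
  | compl (s : Set Omega) : InAlg s → InAlg sᶜ
  | union (s t : Set Omega) : InAlg s → InAlg t → InAlg (s ∪ t)

/-- Finite additivity of a complex set function on the algebra 𝔜. -/
def FinitelyAdditive (μ : Set Omega → ℂ) : Prop :=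
  ∀ s t : Set Omega, InAlg s → InAlg t → Disjoint s t → μ (s ∪ t) = μ s + μ t

/-- A finite partition of Ω into pairwise disjoint members of 𝔜. -/
def IsPartition (π : Finset (Set Omega)) : Prop :=
  (∀ s ∈ π, InAlg s) ∧ ((↑π : Set (Set Omega)).Pairwise Disjoint) ∧
    ⋃₀ (↑π : Set (Set Omega)) = Set.univ

/-- Bounded variation: the sums Σᵢ |μ(αᵢ)| over finite partitions of Ω into members
of 𝔜 are uniformly bounded. -/
def BoundedVariation (μ : Set Omega → ℂ) : Prop :=
  ∃ M : ℝ, ∀ π : Finset (Set Omega), IsPartition π → ∑ s ∈ π, ‖μ s‖ ≤ M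

/-- λ(a,b) = Σ_{k=b}^{a} C(a−b, k−b)·t_k. -/
def lam (t : ℕ → ℂ) (a b : ℕ) : ℂ :=
  ∑ k ∈ Finset.Icc b a, ((a - b).choose (k - b) : ℂ) * t k

/-- The maximal elements of a finite subset `I` with respect to the relation `c`. -/
def maxIn {n : ℕ} (c : Fin n → Fin n → Prop) (I : Finset (Fin n)) : Finset (Fin n) :=
  I.filter fun i => ∀ j ∈ I, ¬ c i j

/-- The past of the element `m` in the node `p`. -/
def pastOf {n : ℕ} (p : Fin n → Fin n → Prop) (m : Fin n) : Finset (Fin n) :=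
  Finset.univ.filter fun i => p i m

/-- The ℂSG amplitude of (the cylinder set of) an `n`-node:
∏_{m=1}^{n−1} λ(ϖ_m, μ_m)/λ(m,0). -/
def amp (t : ℕ → ℂ) {n : ℕ} (p : Fin n → Fin n → Prop) : ℂ :=
  ∏ m ∈ Finset.univ.filter (fun m : Fin n => 1 ≤ (m : ℕ)),
    lam t (pastOf p m).card (maxIn p (pastOf p m)).card / lam t (m : ℕ) 0

/-- μ is the ℂSG measure associated to the coupling constants t: it is finitely
additive on 𝔜 and takes the prescribed values on cylinder sets. -/
def IsCSG (t : ℕ → ℂ) (μ : Set Omega → ℂ) : Prop :=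
  FinitelyAdditive μ ∧
    ∀ (n : ℕ), 1 ≤ n → ∀ p : Fin n → Fin n → Prop, IsNode p → μ (Cyl p) = amp t p

/-- `I` is an order ideal (downward-closed set) of the relation `c`. -/
def isIdeal {n : ℕ} (c : Fin n → Fin n → Prop) (I : Finset (Fin n)) : Prop :=
  ∀ j ∈ I, ∀ i, c i j → i ∈ I

/-- Q(c) := Σ_{I an order ideal of c} |λ(|I|, m(I))|. -/
def Qval (t : ℕ → ℂ) {n : ℕ} (c : Fin n → Fin n → Prop) : ℝ :=
  ∑ I ∈ Finset.univ.filter (fun I : Finset (Fin n) => isIdeal c I),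
    ‖lam t I.card (maxIn c I).card‖

/-- ζ(c) := Q(c)/|λ(n,0)| − 1. -/
def zeta (t : ℕ → ℂ) {n : ℕ} (c : Fin n → Fin n → Prop) : ℝ :=
  Qval t c / ‖lam t n 0‖ - 1

/-- ζ_n^a := (Σ_{k=0}^{n} C(n,k)·|t_k|)/|λ(n,0)| − 1. -/
def zetaA (t : ℕ → ℂ) (n : ℕ) : ℝ :=
  (∑ k ∈ Finset.range (n + 1), (n.choose k : ℝ) * ‖t k‖) /
    ‖lam t n 0‖ - 1

/-- ζ_n^c := (|t_0| + Σ_{ϖ=1}^{n} |λ(ϖ,1)|)/|λ(n,0)| − 1. -/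
def zetaC (t : ℕ → ℂ) (n : ℕ) : ℝ :=
  (‖t 0‖ + ∑ w ∈ Finset.Icc 1 n, ‖lam t w 1‖) /
    ‖lam t n 0‖ - 1

/-- S_n := Σ_{p an n-node} |μ(Cyl(p))|. -/
def Svar (μ : Set Omega → ℂ) (n : ℕ) : ℝ :=
  ∑ p : {p : Fin n → Fin n → Prop // IsNode p}, ‖μ (Cyl p.1)‖

/-- The σ-algebra 𝔖 on Ω generated by the algebra 𝔜. -/
instance : MeasurableSpace Omega := MeasurableSpace.generateFrom {s | InAlg s}

/-!
Ω is compact, being a closed subspace of the Cantor space `ℕ → ℕ → Bool`, and every member of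
𝔜 is clopen. Hence a countable cover of a member of 𝔜 by members of 𝔜 has a finite subcover,
so every `ℝ≥0∞`-valued content on 𝔜 is σ-subadditive and Carathéodory extends it to a measure.
If μ has bounded variation, this applies to its variation |μ|, a finite content dominating μ,
and a content dominated by a finite measure extends to a vector measure. Conversely, a complex
measure is dominated by the sum of the total variations of its real and imaginary parts, which
bounds all partition sums. Uniqueness is the π-λ theorem, 𝔜 being a generating π-system.
-/

open scoped ENNReal

namespace MeasureTheory.AddContent

variable {α E : Type*} [NormedAddCommGroup E] {C : Set (Set α)} (m : AddContent E C)

/-- Suprema over disjoint families inside `s` rather than partitions of `s`: on a ring of sets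
these agree, as `s \ ⋃₀ π` can always be added to `π`. -/
def variation (s : Set α) : ℝ≥0∞ :=
  ⨆ (π : Finset (Set α)) (_ : ↑π ⊆ C ∧ (∀ a ∈ π, a ⊆ s) ∧ (π : Set (Set α)).PairwiseDisjoint id),
    ∑ a ∈ π, ‖m a‖ₑ

variable {m}

lemma sum_enorm_le_variation {s : Set α} {π : Finset (Set α)} (hπC : ↑π ⊆ C)
    (hπs : ∀ a ∈ π, a ⊆ s) (hπ : (π : Set (Set α)).PairwiseDisjoint id) :
    ∑ a ∈ π, ‖m a‖ₑ ≤ m.variation s :=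
  le_iSup₂_of_le π ⟨hπC, hπs, hπ⟩ le_rfl

lemma enorm_le_variation {s : Set α} (hs : s ∈ C) : ‖m s‖ₑ ≤ m.variation s := by
  simpa using sum_enorm_le_variation (m := m) (π := {s}) (by simpa using hs) (by simp) (by simp)

lemma variation_empty : m.variation ∅ = 0 := by
  refine le_antisymm (iSup₂_le fun π ⟨_, hπs, _⟩ => ?_) bot_le
  rw [Finset.sum_eq_zero fun a ha => by simp [Set.subset_empty_iff.mp (hπs a ha)]]

lemma sum_enorm_inter_le_variation (hC : IsSetRing C) {s : Set α} (hs : s ∈ C)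
    {π : Finset (Set α)} (hπC : ↑π ⊆ C) (hπ : (π : Set (Set α)).PairwiseDisjoint id) :
    ∑ a ∈ π, ‖m (a ∩ s)‖ₑ ≤ m.variation s := by
  have hdisj : (π : Set (Set α)).PairwiseDisjoint (· ∩ s) :=
    hπ.mono_on fun a _ => Set.inter_subset_left
  rw [← Finset.sum_image_of_disjoint (g := fun b => ‖m b‖ₑ) (by simp) hdisj]
  refine sum_enorm_le_variation ?_ (by simp) ?_
  · simpa [Set.subset_def] using fun a ha => hC.inter_mem (hπC ha) hs
  · exact hπ.image_finset_of_le fun _ => Set.inter_subset_left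

lemma variation_union (hC : IsSetRing C) {s t : Set α} (hs : s ∈ C) (ht : t ∈ C)
    (hst : Disjoint s t) : m.variation (s ∪ t) = m.variation s + m.variation t := by
  refine le_antisymm (iSup₂_le fun π ⟨hπC, hπs, hπ⟩ => ?_)
    (ENNReal.biSup_add_biSup_le' ⟨∅, by simp⟩ ⟨∅, by simp⟩
      fun π ⟨hπC, hπs, hπ⟩ π' ⟨hπC', hπs', hπ'⟩ => ?_)
  · have hsplit : ∀ a ∈ π, ‖m a‖ₑ ≤ ‖m (a ∩ s)‖ₑ + ‖m (a ∩ t)‖ₑ := fun a ha => by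
      have hma : m a = m (a ∩ s) + m (a ∩ t) := by
        rw [← addContent_union hC (hC.inter_mem (hπC ha) hs) (hC.inter_mem (hπC ha) ht)
          (hst.mono Set.inter_subset_right Set.inter_subset_right), ← Set.inter_union_distrib_left,
          Set.inter_eq_left.mpr (hπs a ha)]
      exact hma ▸ enorm_add_le _ _
    calc ∑ a ∈ π, ‖m a‖ₑ ≤ ∑ a ∈ π, (‖m (a ∩ s)‖ₑ + ‖m (a ∩ t)‖ₑ) := Finset.sum_le_sum hsplit
      _ = ∑ a ∈ π, ‖m (a ∩ s)‖ₑ + ∑ a ∈ π, ‖m (a ∩ t)‖ₑ := Finset.sum_add_distrib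
      _ ≤ m.variation s + m.variation t := add_le_add
          (sum_enorm_inter_le_variation hC hs hπC hπ) (sum_enorm_inter_le_variation hC ht hπC hπ)
  · have hinter : ∑ a ∈ π ∩ π', ‖m a‖ₑ = 0 := Finset.sum_eq_zero fun a ha => by
      rw [Finset.mem_inter] at ha
      simp [disjoint_self.mp (hst.mono (hπs a ha.1) (hπs' a ha.2))]
    rw [← Finset.sum_union_inter, hinter, add_zero]
    refine sum_enorm_le_variation (by simpa using And.intro hπC hπC') ?_ ?_
    · simp only [Finset.mem_union]
      rintro a (ha | ha)
      exacts [(hπs a ha).trans Set.subset_union_left, (hπs' a ha).trans Set.subset_union_right]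
    · rw [Finset.coe_union]
      exact hπ.union hπ' fun a ha b hb _ => hst.mono (hπs a ha) (hπs' b hb)

def variationContent (hC : IsSetRing C) : AddContent ℝ≥0∞ C :=
  hC.addContent_of_union m.variation variation_empty (variation_union hC)

end MeasureTheory.AddContent

namespace MeasureTheory

open MeasurableSpace

variable {α : Type*} {C : Set (Set α)}

lemma AddContent.isSigmaSubadditive_of_isCompact_of_isOpen [TopologicalSpace α]
    (hC : IsSetRing C) (hcompact : ∀ s ∈ C, IsCompact s) (hopen : ∀ s ∈ C, IsOpen s)
    (m : AddContent ℝ≥0∞ C) : m.IsSigmaSubadditive := by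
  intro f hf hU
  obtain ⟨F, hF⟩ := (hcompact _ hU).elim_finite_subcover f (fun i => hopen _ (hf i)) subset_rfl
  calc m (⋃ i, f i) ≤ m (⋃ i ∈ F, f i) :=
        addContent_mono hC.isSetSemiring hU (hC.biUnion_mem F fun i _ => hf i) hF
    _ ≤ ∑ i ∈ F, m (f i) := addContent_biUnion_le hC fun i _ => hf i
    _ ≤ ∑' i, m (f i) := ENNReal.sum_le_tsum F

theorem AddContent.exists_vectorMeasure_extension [TopologicalSpace α] [mα : MeasurableSpace α]
    {E : Type*} [NormedAddCommGroup E] [CompleteSpace E] (hC : IsSetRing C)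
    (hgen : mα = generateFrom C) (hcompact : ∀ s ∈ C, IsCompact s) (hopen : ∀ s ∈ C, IsOpen s)
    (huniv : Set.univ ∈ C) (m : AddContent E C) (hm : m.variation Set.univ ≠ ∞) :
    ∃ ν : VectorMeasure α E, ∀ s ∈ C, ν s = m s := by
  have hσ := isSigmaSubadditive_of_isCompact_of_isOpen hC hcompact hopen (m.variationContent hC)
  set μ := (m.variationContent hC).measure hC.isSetSemiring hgen.le hσ
  have hμ : ∀ s ∈ C, μ s = m.variation s := fun s hs =>
    (m.variationContent hC).measure_eq hC.isSetSemiring hgen hσ hs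
  have : IsFiniteMeasure μ := ⟨by rw [hμ _ huniv]; exact hm.lt_top⟩
  obtain ⟨ν, hν, -⟩ := VectorMeasure.exists_extension_of_isSetSemiring_of_le_measure_of_generateFrom
    hC.isSetSemiring (fun s hs => (hμ s hs).symm ▸ enorm_le_variation hs) hgen
  exact ⟨ν, hν⟩

lemma ComplexMeasure.exists_isFiniteMeasure_norm_le [MeasurableSpace α] (ν : ComplexMeasure α) :
    ∃ μ : Measure α, IsFiniteMeasure μ ∧ ∀ s, ‖ν s‖ ≤ μ.real s := by
  refine ⟨(re ν).totalVariation + (im ν).totalVariation, inferInstance, fun s => ?_⟩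
  calc ‖ν s‖ ≤ |(ν s).re| + |(ν s).im| := Complex.norm_le_abs_re_add_abs_im _
    _ ≤ (re ν).totalVariation.real s + (im ν).totalVariation.real s :=
        add_le_add ((re ν).norm_le_totalVariation s) ((im ν).norm_le_totalVariation s)
    _ = _ := (measureReal_add_apply ..).symm

end MeasureTheory

lemma isClosed_setOf_causalRel : IsClosed {f : ℕ → ℕ → Bool | CausalRel fun i j => f i j} := by
  have hcoord (i j : ℕ) : Continuous fun f : ℕ → ℕ → Bool => f i j := by fun_prop
  simp only [CausalRel, Set.ofPred_and, Set.ofPred_forall]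
  refine .inter (isClosed_iInter fun i => ?_) (.inter (isClosed_iInter fun i => isClosed_iInter
    fun j => isClosed_iInter fun k => ?_) (isClosed_iInter fun i => isClosed_iInter fun j => ?_))
  · exact (isClosed_discrete {b : Bool | ¬ b}).preimage (hcoord i i)
  · exact (isClosed_discrete {b : Bool × Bool × Bool | b.1 → b.2.1 → b.2.2}).preimage
      ((hcoord i j).prodMk ((hcoord j k).prodMk (hcoord i k)))
  · exact (isClosed_discrete {b : Bool | b → i < j}).preimage (hcoord i j)

namespace Omega

def toBool (r : Omega) : ℕ → ℕ → Bool := fun i j => r.1 i j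

lemma toBool_injective : Function.Injective toBool := fun r s h =>
  Subtype.ext <| funext₂ fun i j => propext <| by simpa [toBool] using congr_fun₂ h i j

lemma range_toBool : Set.range toBool = {f : ℕ → ℕ → Bool | CausalRel fun i j => f i j} := by
  ext f
  constructor
  · rintro ⟨r, rfl⟩
    simpa [toBool] using r.2
  · intro hf
    exact ⟨⟨fun i j => f i j, hf⟩, funext₂ fun i j => by simp [toBool]⟩

instance : TopologicalSpace Omega := .induced toBool inferInstance

lemma isClosedEmbedding_toBool : Topology.IsClosedEmbedding toBool :=
  ⟨⟨⟨rfl⟩, toBool_injective⟩, range_toBool ▸ isClosed_setOf_causalRel⟩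

instance : CompactSpace Omega := isClosedEmbedding_toBool.compactSpace

lemma isClopen_cyl {n : ℕ} (p : Fin n → Fin n → Prop) : IsClopen (Cyl p) := by
  have hcont : Continuous fun (r : Omega) (i j : Fin n) => toBool r i j := by
    have := isClosedEmbedding_toBool.continuous
    fun_prop
  convert (isClopen_discrete {fun i j => decide (p i j)}).preimage hcont
  ext r
  simp [Cyl, toBool, funext_iff]

end Omega

lemma InAlg.isClopen {s : Set Omega} (hs : InAlg s) : IsClopen s := by
  induction hs with
  | basic _ p _ => exact Omega.isClopen_cyl p
  | univ => exact isClopen_univ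
  | compl _ _ ih => exact ih.compl
  | union _ _ _ _ ihs iht => exact ihs.union iht

lemma isSetRing_inAlg : IsSetRing {s : Set Omega | InAlg s} where
  empty_mem := by simpa using InAlg.compl _ InAlg.univ
  union_mem := InAlg.union
  sdiff_mem s t hs ht := by
    simpa [Set.sdiff_eq, Set.inter_comm] using InAlg.compl _ (InAlg.union _ _ (InAlg.compl _ hs) ht)

def FinitelyAdditive.addContent {μ : Set Omega → ℂ} (hμ : FinitelyAdditive μ) :
    AddContent ℂ {s | InAlg s} :=
  isSetRing_inAlg.addContent_of_union μ
    (by simpa using hμ ∅ ∅ isSetRing_inAlg.empty_mem isSetRing_inAlg.empty_mem (by simp))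
    fun hs ht => hμ _ _ hs ht

lemma FinitelyAdditive.variation_univ_le {μ : Set Omega → ℂ} (hμ : FinitelyAdditive μ) {M : ℝ}
    (hM : ∀ π : Finset (Set Omega), IsPartition π → ∑ s ∈ π, ‖μ s‖ ≤ M) :
    hμ.addContent.variation Set.univ ≤ ENNReal.ofReal M := by
  refine iSup₂_le fun π ⟨hπC, _, hπ⟩ => ?_
  set u := (⋃₀ (π : Set (Set Omega)))ᶜ
  have hpart : IsPartition (insert u π) := by
    refine ⟨Finset.forall_mem_insert _ _ _ |>.mpr ⟨InAlg.compl _ ?_, fun a ha => hπC ha⟩, ?_, ?_⟩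
    · rw [Set.sUnion_eq_biUnion]
      exact isSetRing_inAlg.biUnion_mem π hπC
    · rw [Finset.coe_insert]
      exact hπ.insert fun b hb _ => disjoint_compl_left.mono_right (Set.subset_sUnion_of_mem hb)
    · rw [Finset.coe_insert, Set.sUnion_insert, Set.compl_union_self]
  calc ∑ a ∈ π, ‖μ a‖ₑ ≤ ∑ a ∈ insert u π, ‖μ a‖ₑ :=
        Finset.sum_le_sum_of_subset (Finset.subset_insert _ _)
    _ = ENNReal.ofReal (∑ a ∈ insert u π, ‖μ a‖) := by
        rw [ENNReal.ofReal_sum_of_nonneg fun _ _ => norm_nonneg _]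
        simp only [ofReal_norm]
    _ ≤ ENNReal.ofReal M := ENNReal.ofReal_le_ofReal (hM _ hpart)

lemma boundedVariation_of_vectorMeasure {μ : Set Omega → ℂ} (ν : VectorMeasure Omega ℂ)
    (hν : ∀ s, InAlg s → ν s = μ s) : BoundedVariation μ := by
  obtain ⟨m, _, hm⟩ := ComplexMeasure.exists_isFiniteMeasure_norm_le ν
  refine ⟨m.real Set.univ, fun π ⟨hπC, hπ, hU⟩ => ?_⟩
  calc ∑ s ∈ π, ‖μ s‖ = ∑ s ∈ π, ‖ν s‖ := Finset.sum_congr rfl fun s hs => by rw [hν s (hπC s hs)]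
    _ ≤ ∑ s ∈ π, m.real s := Finset.sum_le_sum fun s _ => hm s
    _ = m.real (⋃ s ∈ π, s) := (measureReal_biUnion_finset hπ
        fun s hs => MeasurableSpace.measurableSet_generateFrom (hπC s hs)).symm
    _ = m.real Set.univ := by rw [← Finset.set_biUnion_coe, ← Set.sUnion_eq_biUnion, hU]

/-- a finitely additive complex set function on 𝔜 admits a (necessarily
unique) extension to a countably additive complex measure on 𝔖 iff it is of bounded
variation. -/
theorem statement_0 (μ : Set Omega → ℂ) (hμ : FinitelyAdditive μ) :
    ((∃ ν : MeasureTheory.VectorMeasure Omega ℂ,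
        ∀ s : Set Omega, InAlg s → ν s = μ s) ↔ BoundedVariation μ) ∧
    (∀ ν₁ ν₂ : MeasureTheory.VectorMeasure Omega ℂ,
        (∀ s : Set Omega, InAlg s → ν₁ s = μ s) →
        (∀ s : Set Omega, InAlg s → ν₂ s = μ s) → ν₁ = ν₂) := by
  refine ⟨⟨fun ⟨ν, hν⟩ => boundedVariation_of_vectorMeasure ν hν, fun ⟨M, hM⟩ => ?_⟩,
    fun ν₁ ν₂ h₁ h₂ => ?_⟩
  · exact hμ.addContent.exists_vectorMeasure_extension isSetRing_inAlg rfl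
      (fun s hs => hs.isClopen.isClosed.isCompact) (fun s hs => hs.isClopen.isOpen) InAlg.univ
      (ne_top_of_le_ne_top ENNReal.ofReal_ne_top (hμ.variation_univ_le hM))
  · have hagree : ∀ s, InAlg s → ν₁ s = ν₂ s := fun s hs => (h₁ s hs).trans (h₂ s hs).symm
    exact VectorMeasure.ext_of_generateFrom _ hagree rfl
      (fun s hs t ht _ => isSetRing_inAlg.inter_mem hs ht) (hagree _ InAlg.univ)
end
end

section
/- Call two elements r, r′ of Ω order-isomorphic if there is a bijection f : ℕ → ℕ such that r i j ↔ r′ (f i) (f j) for all i, j ∈ ℕ; a subset α ⊆ Ω is covariant if whenever c ∈ α and c′ is order-isomorphic to c then c′ ∈ α. Then the only covariant members of the cylinder-set algebra 𝔜 are ∅ and Ω. -/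
open MeasureTheory Filter Finset

attribute [local instance] Classical.propDecidable

noncomputable section

/-- Two elements of Ω are order-isomorphic if some bijection of ℕ carries one
relation to the other. -/
def OrderIsoRel (c c' : Omega) : Prop :=
  ∃ f : ℕ → ℕ, Function.Bijective f ∧ ∀ i j : ℕ, c.1 i j ↔ c'.1 (f i) (f j)

/-- A covariant subset of Ω: closed under order isomorphism. -/
def CovariantSet (α : Set Omega) : Prop :=
  ∀ c ∈ α, ∀ c' : Omega, OrderIsoRel c c' → c' ∈ α

/-!
A member of 𝔜 is decided by the relations among the first `n` labels, for some `n`. Given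
`c ∈ α` and an arbitrary `d`, form the disjoint union of `c` and `d`, labelled so that the
first `n` labels carry `c`, and the same disjoint union labelled so that they carry `d`. The
first lies in `α` because it agrees with `c` below `n`; the two are order-isomorphic by
swapping the summands, so covariance puts the second in `α`, and it agrees with `d` below `n`.
-/

open Sum

/-- The first `n` elements of the left summand keep their labels; the remaining labels alternate
between the rest of the left summand and the right one, so each summand is labelled
monotonically. -/
def interleave (n : ℕ) : ℕ ⊕ ℕ ≃ ℕ where
  toFun
    | inl i => if i < n then i else n + 2 * (i - n)
    | inr j => n + 2 * j + 1
  invFun a :=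
    if a < n then inl a else if (a - n) % 2 = 0 then inl (n + (a - n) / 2) else inr ((a - n) / 2)
  left_inv := by
    rintro (i | j) <;> dsimp only <;> split_ifs <;> first | rfl | omega | (congr 1; omega)
  right_inv a := by
    dsimp only
    split_ifs <;> dsimp only <;> (try split_ifs) <;> omega

lemma interleave_symm_of_lt {n a : ℕ} (ha : a < n) : (interleave n).symm a = inl a := by
  simp [interleave, ha]

lemma interleave_inl_lt_inl {n i j : ℕ} (h : i < j) :
    interleave n (inl i) < interleave n (inl j) := by
  simp only [interleave, Equiv.coe_fn_mk]
  split_ifs <;> omega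

lemma interleave_inr_lt_inr {n i j : ℕ} (h : i < j) :
    interleave n (inr i) < interleave n (inr j) := by
  simp only [interleave, Equiv.coe_fn_mk]
  omega

def sumRel (n : ℕ) (c d : ℕ → ℕ → Prop) (a b : ℕ) : Prop :=
  LiftRel c d ((interleave n).symm a) ((interleave n).symm b)

lemma causalRel_sumRel (n : ℕ) {c d : ℕ → ℕ → Prop} (hc : CausalRel c)
    (hd : CausalRel d) : CausalRel (sumRel n c d) := by
  obtain ⟨hc_irrefl, hc_trans, hc_lt⟩ := hc
  obtain ⟨hd_irrefl, hd_trans, hd_lt⟩ := hd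
  have h_irrefl : ∀ x, ¬ LiftRel c d x x := by
    rintro _ (⟨h⟩ | ⟨h⟩)
    exacts [hc_irrefl _ h, hd_irrefl _ h]
  have h_trans : ∀ x y z, LiftRel c d x y → LiftRel c d y z → LiftRel c d x z := by
    rintro _ _ _ (⟨hxy⟩ | ⟨hxy⟩) (⟨hyz⟩ | ⟨hyz⟩)
    exacts [LiftRel.inl (hc_trans _ _ _ hxy hyz), LiftRel.inr (hd_trans _ _ _ hxy hyz)]
  have h_lt : ∀ x y, LiftRel c d x y → interleave n x < interleave n y := by
    rintro _ _ (⟨h⟩ | ⟨h⟩)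
    exacts [interleave_inl_lt_inl (hc_lt _ _ h), interleave_inr_lt_inr (hd_lt _ _ h)]
  refine ⟨fun a => h_irrefl _, fun a b e => h_trans _ _ _, fun a b h => ?_⟩
  simpa using h_lt _ _ h

lemma sumRel_iff_of_lt {n i j : ℕ} (c d : ℕ → ℕ → Prop) (hi : i < n) (hj : j < n) :
    sumRel n c d i j ↔ c i j := by
  simp [sumRel, interleave_symm_of_lt hi, interleave_symm_of_lt hj]

lemma sumRel_iff_sumRel_swap (n : ℕ) (c d : ℕ → ℕ → Prop) (a b : ℕ) :
    sumRel n c d a b ↔ sumRel n d c ((interleave n).permCongr (Equiv.sumComm ℕ ℕ) a)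
      ((interleave n).permCongr (Equiv.sumComm ℕ ℕ) b) := by
  simp [sumRel, Equiv.permCongr_apply, liftRel_swap_iff]

def AgreeBelow (n : ℕ) (r r' : Omega) : Prop :=
  ∀ i j : ℕ, i < n → j < n → (r.1 i j ↔ r'.1 i j)

lemma AgreeBelow.mono {m n : ℕ} {r r' : Omega} (h : AgreeBelow n r r') (hmn : m ≤ n) :
    AgreeBelow m r r' :=
  fun i j hi hj => h i j (hi.trans_le hmn) (hj.trans_le hmn)

lemma InAlg.exists_mem_iff_of_agreeBelow {α : Set Omega} (h : InAlg α) :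
    ∃ n, ∀ r r' : Omega, AgreeBelow n r r' → (r ∈ α ↔ r' ∈ α) := by
  induction h with
  | @basic n _ p _ =>
    refine ⟨n, fun r r' hrr' => forall_congr' fun i => forall_congr' fun j => ?_⟩
    rw [hrr' i j i.2 j.2]
  | univ => exact ⟨0, fun _ _ _ => Iff.rfl⟩
  | compl s _ ih =>
    obtain ⟨n, hn⟩ := ih
    exact ⟨n, fun r r' hrr' => (hn r r' hrr').not⟩
  | union s t _ _ ihs iht =>
    obtain ⟨ns, hs⟩ := ihs
    obtain ⟨nt, ht⟩ := iht
    exact ⟨max ns nt, fun r r' hrr' =>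
      or_congr (hs r r' (hrr'.mono (le_max_left _ _))) (ht r r' (hrr'.mono (le_max_right _ _)))⟩

namespace Omega

def interleavedSum (n : ℕ) (c d : Omega) : Omega :=
  ⟨sumRel n c.1 d.1, causalRel_sumRel n c.2 d.2⟩

lemma agreeBelow_interleavedSum (n : ℕ) (c d : Omega) : AgreeBelow n (interleavedSum n c d) c :=
  fun _ _ hi hj => sumRel_iff_of_lt c.1 d.1 hi hj

lemma orderIsoRel_interleavedSum_swap (n : ℕ) (c d : Omega) :
    OrderIsoRel (interleavedSum n c d) (interleavedSum n d c) :=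
  ⟨_, Equiv.bijective _, sumRel_iff_sumRel_swap n c.1 d.1⟩

end Omega

/-- the only covariant members of the cylinder-set algebra 𝔜 are ∅ and Ω. -/
theorem statement_1 (α : Set Omega) (hα : InAlg α) (hcov : CovariantSet α) :
    α = ∅ ∨ α = Set.univ := by
  refine α.eq_empty_or_nonempty.imp id fun ⟨c, hc⟩ => Set.eq_univ_of_forall fun d => ?_
  obtain ⟨n, hn⟩ := hα.exists_mem_iff_of_agreeBelow
  have hcd : Omega.interleavedSum n c d ∈ α :=
    (hn _ _ (Omega.agreeBelow_interleavedSum n c d)).2 hc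
  have hdc : Omega.interleavedSum n d c ∈ α :=
    hcov _ hcd _ (Omega.orderIsoRel_interleavedSum_swap n c d)
  exact (hn _ _ (Omega.agreeBelow_interleavedSum n d c)).1 hdc

end
end

section
/- Let μ_v be the ℂSG measure associated to the coupling constants t. For each n ≥ 1 set ζ_n^max := max ζ(p) and ζ_n^min := min ζ(p), the maximum and minimum being taken over all n-nodes p. If the series Σ_{n≥1} ζ_n^max converges, then μ_v is of bounded variation; if the series Σ_{n≥1} ζ_n^min diverges, then μ_v is not of bounded variation. -/
open MeasureTheory Filter Finset

attribute [local instance] Classical.propDecidable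

noncomputable section

/-!
Write `S n` for the sum of `‖μ (Cyl p)‖` over the `n`-nodes `p`. An `(n+1)`-node is an `n`-node `p`
together with an order ideal `I` of `p`, the past of the new element, and its amplitude is that of
`p` times `λ(|I|, m(I)) / λ(n, 0)`. Hence `S (n+1) = ∑ₚ ‖μ (Cyl p)‖ (1 + ζ(p))`, which lies between
`(1 + ζ_n^min) S n` and `(1 + ζ_n^max) S n`. Every subset `A` of a node arises from exactly one
ideal `I` with `max I ⊆ A ⊆ I` (its down-closure), so `∑_I λ(|I|, m(I)) = λ(n, 0)` and `ζ ≥ 0`.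
Every member of the algebra is a union of cylinder sets of one level, so `μ` has bounded variation
iff `S` is bounded, and `1 + ∑_{k<n} ζ_k^min ≤ S n ≤ exp (∑_{k<n} ζ_k^max)`.
-/

abbrev Node (n : ℕ) := {p : Fin n → Fin n → Prop // IsNode p}

namespace Omega

def restrict (r : Omega) (n : ℕ) : Fin n → Fin n → Prop := fun i j => r.1 i j

lemma isNode_restrict (r : Omega) (n : ℕ) : IsNode (r.restrict n) :=
  ⟨fun i => r.2.1 i, fun _ _ _ => r.2.2.1 _ _ _, fun _ _ => r.2.2.2 _ _⟩

def ofNode {n : ℕ} (p : Fin n → Fin n → Prop) (hp : IsNode p) : Omega :=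
  ⟨fun i j => ∃ (hi : i < n) (hj : j < n), p ⟨i, hi⟩ ⟨j, hj⟩,
    fun _ ⟨_, _, h⟩ => hp.1 _ h,
    fun _ _ _ ⟨hi, _, h⟩ ⟨_, hk, h'⟩ => ⟨hi, hk, hp.2.1 _ _ _ h h'⟩,
    fun _ _ ⟨_, _, h⟩ => hp.2.2 _ _ h⟩

lemma restrict_ofNode {n : ℕ} (p : Fin n → Fin n → Prop) (hp : IsNode p) :
    (ofNode p hp).restrict n = p := by
  funext i j
  exact propext ⟨fun ⟨_, _, h⟩ => h, fun h => ⟨i.2, j.2, h⟩⟩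

lemma restrict_eq_of_le {r r' : Omega} {m n : ℕ} (hmn : m ≤ n)
    (h : r.restrict n = r'.restrict n) : r.restrict m = r'.restrict m := by
  funext i j
  exact congrFun (congrFun h (i.castLE hmn)) (j.castLE hmn)

end Omega

lemma mem_Cyl_iff {n : ℕ} {p : Fin n → Fin n → Prop} {r : Omega} :
    r ∈ Cyl p ↔ r.restrict n = p :=
  ⟨fun h => funext₂ fun i j => propext (h i j), fun h _ _ => h ▸ Iff.rfl⟩

lemma Omega.mem_Cyl_restrict (r : Omega) (n : ℕ) : r ∈ Cyl (r.restrict n) := mem_Cyl_iff.2 rfl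

lemma Omega.ofNode_mem_Cyl {n : ℕ} (p : Fin n → Fin n → Prop) (hp : IsNode p) :
    Omega.ofNode p hp ∈ Cyl p :=
  mem_Cyl_iff.2 (Omega.restrict_ofNode p hp)

lemma pairwise_disjoint_Cyl (n : ℕ) : Pairwise fun p q : Node n => Disjoint (Cyl p.1) (Cyl q.1) :=
  fun _ _ hpq => Set.disjoint_left.2 fun _ hp hq =>
    hpq (Subtype.ext ((mem_Cyl_iff.1 hp).symm.trans (mem_Cyl_iff.1 hq)))

lemma Cyl_injective (n : ℕ) : Function.Injective fun p : Node n => Cyl p.1 :=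
  fun p q h => by
    have hq : Omega.ofNode p.1 p.2 ∈ Cyl q.1 := by
      rw [← show Cyl p.1 = Cyl q.1 from h]; exact Omega.ofNode_mem_Cyl p.1 p.2
    exact Subtype.ext ((Omega.restrict_ofNode p.1 p.2).symm.trans (mem_Cyl_iff.1 hq))

lemma isPartition_Cyl {n : ℕ} (hn : 1 ≤ n) :
    IsPartition (univ.image fun p : Node n => Cyl p.1) := by
  refine ⟨?_, ?_, ?_⟩
  · simp only [mem_image, mem_univ, true_and]
    rintro _ ⟨p, rfl⟩
    exact InAlg.basic hn p.1 p.2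
  · simp only [coe_image, coe_univ, Set.image_univ]
    exact (pairwise_disjoint_Cyl n).range_pairwise
  · refine Set.sUnion_eq_univ_iff.2 fun r => ⟨Cyl (r.restrict n), ?_, r.mem_Cyl_restrict n⟩
    simpa using ⟨_, r.isNode_restrict n, rfl⟩

lemma sum_image_Cyl (μ : Set Omega → ℂ) (n : ℕ) :
    ∑ s ∈ univ.image (fun p : Node n => Cyl p.1), ‖μ s‖ = Svar μ n :=
  sum_image fun _ _ _ _ h => Cyl_injective n h

def IsDeterminedAt (n : ℕ) (s : Set Omega) : Prop :=
  ∀ r r' : Omega, r.restrict n = r'.restrict n → (r ∈ s ↔ r' ∈ s)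

lemma IsDeterminedAt.mono {m n : ℕ} {s : Set Omega} (h : IsDeterminedAt m s) (hmn : m ≤ n) :
    IsDeterminedAt n s :=
  fun r r' hrr' => h r r' (Omega.restrict_eq_of_le hmn hrr')

lemma InAlg.eventually_isDeterminedAt {s : Set Omega} (hs : InAlg s) :
    ∀ᶠ n in atTop, IsDeterminedAt n s := by
  induction hs with
  | @basic n _ p _ =>
    refine eventually_atTop.2 ⟨n, fun m hm => IsDeterminedAt.mono (fun r r' hrr' => ?_) hm⟩
    rw [mem_Cyl_iff, mem_Cyl_iff, hrr']
  | univ => exact Eventually.of_forall fun _ _ _ _ => Iff.rfl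
  | compl _ _ ih => exact ih.mono fun _ h r r' hrr' => not_congr (h r r' hrr')
  | union _ _ _ _ ihs iht =>
    exact (ihs.and iht).mono fun _ h r r' hrr' => or_congr (h.1 r r' hrr') (h.2 r r' hrr')

def nodesIn (n : ℕ) (s : Set Omega) : Finset (Node n) :=
  univ.filter fun p => Omega.ofNode p.1 p.2 ∈ s

lemma IsDeterminedAt.eq_biUnion_Cyl {n : ℕ} {s : Set Omega} (hs : IsDeterminedAt n s) :
    s = ⋃ p ∈ nodesIn n s, Cyl p.1 := by
  ext r
  simp only [Set.mem_iUnion, nodesIn, mem_filter, mem_univ, true_and, exists_prop]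
  constructor
  · intro hr
    refine ⟨⟨r.restrict n, r.isNode_restrict n⟩, ?_, r.mem_Cyl_restrict n⟩
    exact (hs r _ (Omega.restrict_ofNode _ _).symm).1 hr
  · rintro ⟨p, hps, hrp⟩
    exact (hs r _ ((mem_Cyl_iff.1 hrp).trans (Omega.restrict_ofNode _ _).symm)).2 hps

lemma inAlg_empty : InAlg (∅ : Set Omega) :=
  Set.compl_univ ▸ InAlg.compl _ InAlg.univ

lemma inAlg_biUnion_Cyl {n : ℕ} (hn : 1 ≤ n) (T : Finset (Node n)) :
    InAlg (⋃ p ∈ T, Cyl p.1) := by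
  induction T using Finset.induction with
  | empty => simpa using inAlg_empty
  | insert p T _ ih =>
    rw [set_biUnion_insert]
    exact InAlg.union _ _ (InAlg.basic hn p.1 p.2) ih

namespace FinitelyAdditive

variable {μ : Set Omega → ℂ}

lemma map_empty (hμ : FinitelyAdditive μ) : μ ∅ = 0 := by
  simpa using hμ ∅ ∅ inAlg_empty inAlg_empty disjoint_bot_left

lemma map_biUnion_Cyl (hμ : FinitelyAdditive μ) {n : ℕ} (hn : 1 ≤ n) (T : Finset (Node n)) :
    μ (⋃ p ∈ T, Cyl p.1) = ∑ p ∈ T, μ (Cyl p.1) := by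
  induction T using Finset.induction with
  | empty => simpa using hμ.map_empty
  | insert p T hp ih =>
    have hdisj : Disjoint (Cyl p.1) (⋃ q ∈ T, Cyl q.1) :=
      Set.disjoint_iUnion₂_right.2 fun q hq =>
        pairwise_disjoint_Cyl n fun hpq => hp (hpq ▸ hq)
    rw [set_biUnion_insert, hμ _ _ (InAlg.basic hn p.1 p.2) (inAlg_biUnion_Cyl hn T) hdisj,
      ih, sum_insert hp]

lemma sum_norm_le_Svar (hμ : FinitelyAdditive μ) {π : Finset (Set Omega)}
    (hπ : IsPartition π) : ∃ N, 1 ≤ N ∧ ∑ s ∈ π, ‖μ s‖ ≤ Svar μ N := by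
  obtain ⟨N, hN, hdet⟩ := ((eventually_ge_atTop 1).and
    (π.eventually_all.2 fun s hs => (hπ.1 s hs).eventually_isDeterminedAt)).exists
  have hdisj : (π : Set (Set Omega)).PairwiseDisjoint (nodesIn N) :=
    fun s hs s' hs' hss' => disjoint_filter.2 fun _ _ h h' =>
      Set.disjoint_left.1 (hπ.2.1 hs hs' hss') h h'
  refine ⟨N, hN, ?_⟩
  calc ∑ s ∈ π, ‖μ s‖
      = ∑ s ∈ π, ‖∑ p ∈ nodesIn N s, μ (Cyl p.1)‖ := sum_congr rfl fun s hs => by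
        rw [← hμ.map_biUnion_Cyl hN, ← (hdet s hs).eq_biUnion_Cyl]
    _ ≤ ∑ s ∈ π, ∑ p ∈ nodesIn N s, ‖μ (Cyl p.1)‖ :=
        sum_le_sum fun _ _ => norm_sum_le _ _
    _ = ∑ p ∈ π.biUnion (nodesIn N), ‖μ (Cyl p.1)‖ := (sum_biUnion hdisj).symm
    _ ≤ Svar μ N :=
        sum_le_sum_of_subset_of_nonneg (subset_univ _) fun _ _ _ => norm_nonneg _

lemma boundedVariation_iff (hμ : FinitelyAdditive μ) :
    BoundedVariation μ ↔ ∃ M, ∀ N, 1 ≤ N → Svar μ N ≤ M := by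
  constructor
  · rintro ⟨M, hM⟩
    exact ⟨M, fun N hN => sum_image_Cyl μ N ▸ hM _ (isPartition_Cyl hN)⟩
  · rintro ⟨M, hM⟩
    refine ⟨M, fun π hπ => ?_⟩
    obtain ⟨N, hN, hle⟩ := hμ.sum_norm_le_Svar hπ
    exact hle.trans (hM N hN)

end FinitelyAdditive

lemma lam_add_left (t : ℕ → ℂ) (b d : ℕ) :
    lam t (b + d) b = ∑ j ∈ range (d + 1), (d.choose j : ℂ) * t (b + j) := by
  rw [lam, ← Ico_add_one_right_eq_Icc, sum_Ico_eq_sum_range]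
  simp only [Nat.add_sub_cancel_left, show b + d + 1 - b = d + 1 by omega]

lemma lam_card_eq_sum_Icc (t : ℕ → ℂ) {α : Type*} [DecidableEq α] {M I : Finset α}
    (h : M ⊆ I) : lam t #I #M = ∑ A ∈ Icc M I, t #A := by
  have hcard : #I = #M + #(I \ M) := by
    rw [card_sdiff_of_subset h]; have := card_le_card h; omega
  rw [Icc_eq_image_powerset h, sum_image fun B hB B' hB' hBB' => ?_]
  · rw [sum_congr rfl fun B hB => by
      rw [card_union_of_disjoint (disjoint_of_subset_right (mem_powerset.1 hB) disjoint_sdiff)],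
      sum_powerset_apply_card (fun k => t (#M + k)), hcard, lam_add_left]
    simp only [nsmul_eq_mul]
  · have hd : ∀ C ∈ (I \ M).powerset, Disjoint M C := fun C hC =>
      disjoint_of_subset_right (mem_powerset.1 hC) disjoint_sdiff
    simpa [union_sdiff_cancel_left (hd B hB), union_sdiff_cancel_left (hd B' hB')] using
      congrArg (· \ M) hBB'

section OrderIdeals

variable {n : ℕ} {c : Fin n → Fin n → Prop}

def downClosure (c : Fin n → Fin n → Prop) (A : Finset (Fin n)) : Finset (Fin n) :=
  univ.filter fun i => i ∈ A ∨ ∃ j ∈ A, c i j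

lemma subset_downClosure (A : Finset (Fin n)) : A ⊆ downClosure c A :=
  fun i hi => mem_filter.2 ⟨mem_univ i, Or.inl hi⟩

lemma isIdeal_downClosure (hc : IsNode c) (A : Finset (Fin n)) : isIdeal c (downClosure c A) := by
  intro j hj i hij
  simp only [downClosure, mem_filter, mem_univ, true_and] at hj ⊢
  rcases hj with hj | ⟨k, hk, hjk⟩
  · exact Or.inr ⟨j, hj, hij⟩
  · exact Or.inr ⟨k, hk, hc.2.1 _ _ _ hij hjk⟩

lemma maxIn_downClosure_subset (A : Finset (Fin n)) : maxIn c (downClosure c A) ⊆ A := by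
  intro i hi
  obtain ⟨hiA, hmax⟩ := mem_filter.1 hi
  obtain ⟨-, hiA | ⟨j, hj, hij⟩⟩ := mem_filter.1 hiA
  · exact hiA
  · exact absurd hij (hmax j (subset_downClosure A hj))

lemma exists_mem_maxIn (hc : IsNode c) {I : Finset (Fin n)} {x : Fin n} (hx : x ∈ I) :
    ∃ y ∈ maxIn c I, x = y ∨ c x y := by
  -- the element of largest label among those of `I` above or equal to `x` is maximal
  obtain ⟨y, hy, hymax⟩ := exists_max_image (I.filter fun y => x = y ∨ c x y) (fun y => (y : ℕ))
    ⟨x, mem_filter.2 ⟨hx, Or.inl rfl⟩⟩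
  obtain ⟨hyI, hxy⟩ := mem_filter.1 hy
  refine ⟨y, mem_filter.2 ⟨hyI, fun z hz hyz => ?_⟩, hxy⟩
  have hxz : x = z ∨ c x z := Or.inr (hxy.elim (· ▸ hyz) (hc.2.1 _ _ _ · hyz))
  exact absurd (hymax z (mem_filter.2 ⟨hz, hxz⟩)) (not_le.2 (hc.2.2 _ _ hyz))

lemma downClosure_eq_of_subset (hc : IsNode c) {I A : Finset (Fin n)} (hI : isIdeal c I)
    (hMA : maxIn c I ⊆ A) (hAI : A ⊆ I) : downClosure c A = I := by
  refine Subset.antisymm (fun i hi => ?_) fun x hx => ?_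
  · obtain ⟨-, hi | ⟨j, hj, hij⟩⟩ := mem_filter.1 hi
    · exact hAI hi
    · exact hI j (hAI hj) i hij
  · obtain ⟨y, hy, rfl | hxy⟩ := exists_mem_maxIn hc hx
    · exact subset_downClosure A (hMA hy)
    · exact mem_filter.2 ⟨mem_univ x, Or.inr ⟨y, hMA hy, hxy⟩⟩

lemma isIdeal_and_subset_iff (hc : IsNode c) {I A : Finset (Fin n)} :
    isIdeal c I ∧ maxIn c I ⊆ A ∧ A ⊆ I ↔ downClosure c A = I := by
  refine ⟨fun ⟨hI, hMA, hAI⟩ => downClosure_eq_of_subset hc hI hMA hAI, ?_⟩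
  rintro rfl
  exact ⟨isIdeal_downClosure hc A, maxIn_downClosure_subset A, subset_downClosure A⟩

lemma sum_lam_ideals (t : ℕ → ℂ) (hc : IsNode c) :
    ∑ I ∈ univ.filter (fun I : Finset (Fin n) => isIdeal c I), lam t #I #(maxIn c I) =
      lam t n 0 :=
  calc ∑ I ∈ univ.filter (fun I : Finset (Fin n) => isIdeal c I), lam t #I #(maxIn c I)
      = ∑ I ∈ univ.filter (fun I : Finset (Fin n) => isIdeal c I), ∑ A ∈ Icc (maxIn c I) I,
          t #A := sum_congr rfl fun I _ => lam_card_eq_sum_Icc t (filter_subset _ _)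
    _ = ∑ A : Finset (Fin n), ∑ _I ∈ {downClosure c A}, t #A := sum_comm' fun I A => by
        simpa [and_assoc, eq_comm] using isIdeal_and_subset_iff hc
    _ = lam t n 0 := by
        have := lam_card_eq_sum_Icc t (empty_subset (univ : Finset (Fin n)))
        rw [← bot_eq_empty, ← top_eq_univ, Icc_bot_top] at this
        simpa using this.symm

lemma zeta_nonneg {t : ℕ → ℂ} (hlam : ∀ m : ℕ, lam t m 0 ≠ 0) (hc : IsNode c) :
    0 ≤ zeta t c := by
  rw [zeta, sub_nonneg, le_div_iff₀ (norm_pos_iff.2 (hlam n)), one_mul, ← sum_lam_ideals t hc]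
  exact norm_sum_le _ _

lemma one_add_zeta (t : ℕ → ℂ) (c : Fin n → Fin n → Prop) :
    1 + zeta t c = Qval t c / ‖lam t n 0‖ := by
  rw [zeta]; ring

end OrderIdeals

section Extension

variable {n : ℕ}

-- `p` extended by a new element, labelled `n`, whose past is `I`
def extNode (p : Fin n → Fin n → Prop) (I : Finset (Fin n)) : Fin (n + 1) → Fin (n + 1) → Prop :=
  Fin.lastCases (fun _ => False) fun i => Fin.lastCases (i ∈ I) (p i)

def truncNode (q : Fin (n + 1) → Fin (n + 1) → Prop) : Fin n → Fin n → Prop :=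
  fun i j => q i.castSucc j.castSucc

def lastPast (q : Fin (n + 1) → Fin (n + 1) → Prop) : Finset (Fin n) :=
  univ.filter fun i => q i.castSucc (Fin.last n)

variable {p : Fin n → Fin n → Prop} {I : Finset (Fin n)}

@[simp] lemma extNode_castSucc_castSucc (i j : Fin n) :
    extNode p I i.castSucc j.castSucc ↔ p i j := by
  simp [extNode]

@[simp] lemma extNode_castSucc_last (i : Fin n) : extNode p I i.castSucc (Fin.last n) ↔ i ∈ I := by
  simp [extNode]

@[simp] lemma not_extNode_last (j : Fin (n + 1)) : ¬ extNode p I (Fin.last n) j := by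
  simp [extNode]

lemma isNode_extNode (hp : IsNode p) (hI : isIdeal p I) : IsNode (extNode p I) := by
  refine ⟨fun i => ?_, fun i j k => ?_, fun i j => ?_⟩
  · cases i using Fin.lastCases <;> simp [hp.1]
  · cases i using Fin.lastCases <;> cases j using Fin.lastCases <;>
      cases k using Fin.lastCases <;> simp
    · exact fun hij hj => hI _ hj _ hij
    · exact hp.2.1 _ _ _
  · cases i using Fin.lastCases <;> cases j using Fin.lastCases <;> simp
    · exact hp.2.2 _ _

lemma isNode_truncNode {q : Fin (n + 1) → Fin (n + 1) → Prop} (hq : IsNode q) :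
    IsNode (truncNode q) :=
  ⟨fun _ => hq.1 _, fun _ _ _ => hq.2.1 _ _ _, fun _ _ h => hq.2.2 _ _ h⟩

lemma isIdeal_lastPast {q : Fin (n + 1) → Fin (n + 1) → Prop} (hq : IsNode q) :
    isIdeal (truncNode q) (lastPast q) := fun _ hj _ hij =>
  mem_filter.2 ⟨mem_univ _, hq.2.1 _ _ _ hij (mem_filter.1 hj).2⟩

lemma extNode_truncNode {q : Fin (n + 1) → Fin (n + 1) → Prop} (hq : IsNode q) :
    extNode (truncNode q) (lastPast q) = q := by
  funext i j
  cases i using Fin.lastCases <;> cases j using Fin.lastCases <;>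
    simp [truncNode, lastPast]
  · exact hq.1 _
  · exact fun h => absurd (hq.2.2 _ _ h) (not_lt.2 (Fin.le_last _))

lemma truncNode_extNode : truncNode (extNode p I) = p := by
  funext i j; simp [truncNode]

lemma lastPast_extNode : lastPast (extNode p I) = I := by
  ext i; simp [lastPast]

def nodeSuccEquiv : Node (n + 1) ≃ Σ p : Node n, {I : Finset (Fin n) // isIdeal p.1 I} where
  toFun q := ⟨⟨truncNode q.1, isNode_truncNode q.2⟩, ⟨lastPast q.1, isIdeal_lastPast q.2⟩⟩
  invFun x := ⟨extNode x.1.1 x.2.1, isNode_extNode x.1.2 x.2.2⟩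
  left_inv q := Subtype.ext (extNode_truncNode q.2)
  right_inv _ := Sigma.subtype_ext (Subtype.ext truncNode_extNode) lastPast_extNode

lemma pastOf_extNode_castSucc (m : Fin n) :
    pastOf (extNode p I) m.castSucc = (pastOf p m).map Fin.castSuccEmb := by
  ext i
  cases i using Fin.lastCases <;> simp [pastOf]

lemma pastOf_extNode_last : pastOf (extNode p I) (Fin.last n) = I.map Fin.castSuccEmb := by
  ext i
  cases i using Fin.lastCases <;> simp [pastOf]

lemma maxIn_extNode_map (S : Finset (Fin n)) :
    maxIn (extNode p I) (S.map Fin.castSuccEmb) = (maxIn p S).map Fin.castSuccEmb := by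
  ext i
  cases i using Fin.lastCases <;> simp [maxIn]

lemma amp_extNode (t : ℕ → ℂ) (hn : 1 ≤ n) :
    amp t (extNode p I) = amp t p * (lam t #I #(maxIn p I) / lam t n 0) := by
  simp only [amp, prod_filter, Fin.prod_univ_castSucc, Fin.val_castSucc, Fin.val_last, if_pos hn,
    pastOf_extNode_castSucc, pastOf_extNode_last, maxIn_extNode_map, card_map]

end Extension

lemma monotone_sum_Ico {f : ℕ → ℝ} {a : ℕ} (hf : ∀ n ≥ a, 0 ≤ f n) :
    Monotone fun N => ∑ n ∈ Ico a N, f n :=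
  fun _ _ hNM => sum_le_sum_of_subset_of_nonneg (Ico_subset_Ico le_rfl hNM)
    fun i hi _ => hf i (mem_Ico.1 hi).1

lemma one_add_sum_Ico_le {u z : ℕ → ℝ} {a : ℕ} (hua : 1 ≤ u a) (hz : ∀ n ≥ a, 0 ≤ z n)
    (hu : ∀ n ≥ a, (1 + z n) * u n ≤ u (n + 1)) {N : ℕ} (hN : a ≤ N) :
    1 + ∑ n ∈ Ico a N, z n ≤ u N := by
  induction N, hN using Nat.le_induction with
  | base => simpa using hua
  | succ N hN ih =>
    have hsum : 0 ≤ ∑ n ∈ Ico a N, z n := sum_nonneg fun i hi => hz i (mem_Ico.1 hi).1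
    have := hu N hN
    have := hz N hN
    rw [sum_Ico_succ_top hN]
    nlinarith

section Variation

variable {t : ℕ → ℂ} {μ : Set Omega → ℂ} {n : ℕ}

instance : Unique (Node 1) where
  default := ⟨fun _ _ => False, fun _ h => h, fun _ _ _ h => h.elim, fun _ _ h => h.elim⟩
  uniq p := Subtype.ext <| funext₂ fun i j => propext <| iff_false_intro <|
    Subsingleton.elim i j ▸ p.2.1 i

lemma Svar_eq_sum_amp (hμ : IsCSG t μ) (hn : 1 ≤ n) : Svar μ n = ∑ p : Node n, ‖amp t p.1‖ :=
  sum_congr rfl fun p _ => by rw [hμ.2 n hn p.1 p.2]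

lemma Svar_one (hμ : IsCSG t μ) : Svar μ 1 = 1 := by
  simp [Svar_eq_sum_amp hμ le_rfl, amp]

lemma Svar_succ (hμ : IsCSG t μ) (hn : 1 ≤ n) :
    Svar μ (n + 1) = ∑ p : Node n, ‖μ (Cyl p.1)‖ * (1 + zeta t p.1) := by
  rw [Svar_eq_sum_amp hμ (Nat.le_succ_of_le hn), ← nodeSuccEquiv.symm.sum_comp,
    Fintype.sum_sigma]
  refine sum_congr rfl fun p _ => ?_
  rw [one_add_zeta, Qval, hμ.2 n hn p.1 p.2, sum_div, mul_sum,
    sum_subtype (p := fun I => isIdeal p.1 I) (univ.filter _) fun I => by simp]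
  refine sum_congr rfl fun I _ => ?_
  simp [nodeSuccEquiv, amp_extNode t hn]

lemma Svar_succ_le (hμ : IsCSG t μ) (hn : 1 ≤ n) {z : ℝ} (hz : ∀ p : Node n, zeta t p.1 ≤ z) :
    Svar μ (n + 1) ≤ (1 + z) * Svar μ n := by
  rw [Svar_succ hμ hn, Svar, mul_sum]
  exact sum_le_sum fun p _ => by rw [mul_comm]; gcongr; exact hz p

lemma le_Svar_succ (hμ : IsCSG t μ) (hn : 1 ≤ n) {z : ℝ} (hz : ∀ p : Node n, z ≤ zeta t p.1) :
    (1 + z) * Svar μ n ≤ Svar μ (n + 1) := by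
  rw [Svar_succ hμ hn, Svar, mul_sum]
  exact sum_le_sum fun p _ => by rw [mul_comm]; gcongr; exact hz p

lemma Svar_le_exp_sum (hμ : IsCSG t μ) {z : ℕ → ℝ}
    (hz0 : ∀ n ≥ 1, 0 ≤ z n) (hz : ∀ n ≥ 1, ∀ p : Node n, zeta t p.1 ≤ z n) {N : ℕ}
    (hN : 1 ≤ N) : Svar μ N ≤ Real.exp (∑ n ∈ Ico 1 N, z n) := by
  simpa [Svar_one hμ] using discrete_gronwall (u := Svar μ) (b := 0)
    (sum_nonneg fun _ _ => norm_nonneg _)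
    (fun n hn => by simpa using Svar_succ_le hμ hn (hz n hn)) hz0 (fun _ _ => le_rfl) hN

lemma one_add_sum_le_Svar (hμ : IsCSG t μ) {z : ℕ → ℝ}
    (hz0 : ∀ n ≥ 1, 0 ≤ z n) (hz : ∀ n ≥ 1, ∀ p : Node n, z n ≤ zeta t p.1) {N : ℕ}
    (hN : 1 ≤ N) : 1 + ∑ n ∈ Ico 1 N, z n ≤ Svar μ N :=
  one_add_sum_Ico_le (Svar_one hμ).ge hz0 (fun n hn => le_Svar_succ hμ hn (hz n hn)) hN

end Variation

theorem statement_4_general (t : ℕ → ℂ) (hlam : ∀ m : ℕ, lam t m 0 ≠ 0)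
    (μ : Set Omega → ℂ) (hμ : IsCSG t μ)
    (ζmax ζmin : ℕ → ℝ)
    (hmax : ∀ n : ℕ, 1 ≤ n →
      IsGreatest {x : ℝ | ∃ p : Fin n → Fin n → Prop, IsNode p ∧ x = zeta t p} (ζmax n))
    (hmin : ∀ n : ℕ, 1 ≤ n →
      IsLeast {x : ℝ | ∃ p : Fin n → Fin n → Prop, IsNode p ∧ x = zeta t p} (ζmin n)) :
    ((∃ L : ℝ, Filter.Tendsto (fun N => ∑ n ∈ Finset.Ico 1 N, ζmax n)
        Filter.atTop (nhds L)) → BoundedVariation μ) ∧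
    (¬ (∃ L : ℝ, Filter.Tendsto (fun N => ∑ n ∈ Finset.Ico 1 N, ζmin n)
        Filter.atTop (nhds L)) → ¬ BoundedVariation μ) := by
  have zeta_le_max (n) (hn : n ≥ 1) (p : Node n) : zeta t p.1 ≤ ζmax n :=
    (hmax n hn).2 ⟨p.1, p.2, rfl⟩
  have min_le_zeta (n) (hn : n ≥ 1) (p : Node n) : ζmin n ≤ zeta t p.1 :=
    (hmin n hn).2 ⟨p.1, p.2, rfl⟩
  have max_nonneg (n) (hn : n ≥ 1) : 0 ≤ ζmax n := by
    obtain ⟨p, hp, h⟩ := (hmax n hn).1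
    exact h ▸ zeta_nonneg hlam hp
  have min_nonneg (n) (hn : n ≥ 1) : 0 ≤ ζmin n := by
    obtain ⟨p, hp, h⟩ := (hmin n hn).1
    exact h ▸ zeta_nonneg hlam hp
  rw [hμ.1.boundedVariation_iff]
  refine ⟨fun ⟨L, hL⟩ => ?_, fun hdiv ⟨M, hM⟩ => hdiv ?_⟩
  · obtain ⟨B, hB⟩ := hL.bddAbove_range
    exact ⟨Real.exp B, fun N hN => (Svar_le_exp_sum hμ max_nonneg zeta_le_max hN).trans
      (Real.exp_le_exp.2 (hB ⟨N, rfl⟩))⟩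
  · refine ⟨_, tendsto_atTop_ciSup (monotone_sum_Ico min_nonneg) ⟨M, ?_⟩⟩
    rintro _ ⟨N, rfl⟩
    calc ∑ n ∈ Ico 1 N, ζmin n ≤ 1 + ∑ n ∈ Ico 1 (N + 1), ζmin n := by
          linarith [monotone_sum_Ico min_nonneg N.le_succ]
      _ ≤ Svar μ (N + 1) := one_add_sum_le_Svar hμ min_nonneg min_le_zeta N.succ_pos
      _ ≤ M := hM _ N.succ_pos

/-- if Σ_{n≥1} ζ_n^max converges then the ℂSG measure μ_v is of bounded
variation; if Σ_{n≥1} ζ_n^min diverges then μ_v is not of bounded variation.  Here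
ζ_n^max (resp. ζ_n^min) is the maximum (resp. minimum) of ζ(p) over all n-nodes p. -/
theorem statement_4 (t : ℕ → ℂ) (ht0 : t 0 = 1) (hlam : ∀ m : ℕ, lam t m 0 ≠ 0)
    (μ : Set Omega → ℂ) (hμ : IsCSG t μ)
    (ζmax ζmin : ℕ → ℝ)
    (hmax : ∀ n : ℕ, 1 ≤ n →
      IsGreatest {x : ℝ | ∃ p : Fin n → Fin n → Prop, IsNode p ∧ x = zeta t p} (ζmax n))
    (hmin : ∀ n : ℕ, 1 ≤ n →
      IsLeast {x : ℝ | ∃ p : Fin n → Fin n → Prop, IsNode p ∧ x = zeta t p} (ζmin n)) :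
    ((∃ L : ℝ, Filter.Tendsto (fun N => ∑ n ∈ Finset.Ico 1 N, ζmax n)
        Filter.atTop (nhds L)) → BoundedVariation μ) ∧
    (¬ (∃ L : ℝ, Filter.Tendsto (fun N => ∑ n ∈ Finset.Ico 1 N, ζmin n)
        Filter.atTop (nhds L)) → ¬ BoundedVariation μ) :=
  statement_4_general t hlam μ hμ ζmax ζmin hmax hmin

end
end

section
/- Suppose t_0 = 1 and λ(n,0) ≠ 0 for all n. Then ζ_n^a = 0 for every n ≥ 1 if and only if t_k is a nonnegative real number for every k. -/
open MeasureTheory Filter Finset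

attribute [local instance] Classical.propDecidable

noncomputable section

/-! ζ_n^a = 0 says that the triangle inequality for λ(n,0) = Σ_k C(n,k) t_k is an equality.
In a strictly convex space this puts all terms on one ray; for n = k the terms t_0 = 1 and t_k
then lie on a common ray, so t_k is a nonnegative real. Conversely, nonnegative terms have
λ(n,0) ≥ t_0 = 1 and trivially give equality. -/

open scoped ComplexOrder

lemma lam_zero_eq_sum (t : ℕ → ℂ) (n : ℕ) :
    lam t n 0 = ∑ k ∈ range (n + 1), (n.choose k : ℂ) * t k := by
  simp [lam, ← Nat.range_succ_eq_Icc_zero]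

-- With `x / 0 = 0`, `zetaA t n = -1` whenever `lam t n 0 = 0`.
lemma zetaA_eq_zero_iff (t : ℕ → ℂ) (n : ℕ) :
    zetaA t n = 0 ↔ lam t n 0 ≠ 0 ∧
      ‖lam t n 0‖ = ∑ k ∈ range (n + 1), ‖(n.choose k : ℂ) * t k‖ := by
  simp only [zetaA, sub_eq_zero, norm_mul, Complex.norm_natCast]
  constructor
  · intro h
    have hne : ‖lam t n 0‖ ≠ 0 := by rintro h0; simp [h0] at h
    exact ⟨norm_ne_zero_iff.1 hne, ((div_eq_one_iff_eq hne).1 h).symm⟩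
  · rintro ⟨hne, h⟩
    rw [← h, div_self (norm_ne_zero_iff.2 hne)]

section SameRay

variable {ι E : Type*} [NormedAddCommGroup E] [NormedSpace ℝ E] [StrictConvexSpace ℝ E]
  {s : Finset ι} {f : ι → E}

lemma sameRay_sum_of_norm_sum_eq_sum_norm (h : ‖∑ i ∈ s, f i‖ = ∑ i ∈ s, ‖f i‖) {i : ι}
    (hi : i ∈ s) : SameRay ℝ (f i) (∑ j ∈ s, f j) := by
  rw [← add_sum_erase s f hi] at h ⊢
  rw [← add_sum_erase s _ hi] at h
  have hrest : ‖f i + ∑ j ∈ s.erase i, f j‖ = ‖f i‖ + ‖∑ j ∈ s.erase i, f j‖ :=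
    le_antisymm (norm_add_le _ _) (by linarith [norm_sum_le (s.erase i) f])
  exact (SameRay.refl _).add_right (sameRay_iff_norm_add.2 hrest)

lemma sameRay_of_norm_sum_eq_sum_norm (h : ‖∑ i ∈ s, f i‖ = ∑ i ∈ s, ‖f i‖) {i j : ι}
    (hi : i ∈ s) (hj : j ∈ s) : SameRay ℝ (f i) (f j) := by
  by_cases hs : ∑ k ∈ s, f k = 0
  · have hfi : ‖f i‖ = 0 := by
      rw [hs, norm_zero, eq_comm, sum_eq_zero_iff_of_nonneg (fun _ _ => norm_nonneg _)] at h
      exact h i hi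
    rw [norm_eq_zero.1 hfi]
    exact SameRay.zero_left _
  · exact (sameRay_sum_of_norm_sum_eq_sum_norm h hi).trans
      (sameRay_sum_of_norm_sum_eq_sum_norm h hj).symm fun h0 => absurd h0 hs

end SameRay

lemma RCLike.nonneg_of_sameRay_one {K : Type*} [RCLike K] {z : K} (h : SameRay ℝ 1 z) :
    0 ≤ z := by
  obtain ⟨r, hr, rfl⟩ := h.exists_nonneg_left one_ne_zero
  simpa [RCLike.real_smul_eq_coe_mul] using (RCLike.ofReal_nonneg (K := K)).2 hr

lemma RCLike.norm_sum_of_nonneg {ι K : Type*} [RCLike K] {s : Finset ι} {f : ι → K}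
    (hf : ∀ i ∈ s, 0 ≤ f i) : ‖∑ i ∈ s, f i‖ = ∑ i ∈ s, ‖f i‖ := by
  apply RCLike.ofReal_injective (K := K)
  rw [RCLike.norm_of_nonneg' (sum_nonneg hf), RCLike.ofReal_sum]
  exact sum_congr rfl fun i hi => (RCLike.norm_of_nonneg' (hf i hi)).symm

theorem statement_10_general (t : ℕ → ℂ) (ht0 : t 0 = 1) :
    (∀ n : ℕ, 1 ≤ n → zetaA t n = 0) ↔ (∀ k : ℕ, ∃ s : ℝ, 0 ≤ s ∧ t k = (s : ℂ)) := by
  have hnonneg : ∀ k, (∃ s : ℝ, 0 ≤ s ∧ t k = (s : ℂ)) ↔ 0 ≤ t k := fun k => by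
    rw [RCLike.nonneg_iff_exists_ofReal (K := ℂ)]; simp [eq_comm]
  simp only [hnonneg, zetaA_eq_zero_iff, lam_zero_eq_sum]
  constructor
  · intro h k
    rcases k.eq_zero_or_pos with rfl | hk
    · simp [ht0]
    · have hray := sameRay_of_norm_sum_eq_sum_norm (h k hk).2 (mem_range.2 k.succ_pos)
        (mem_range.2 k.lt_succ_self)
      exact RCLike.nonneg_of_sameRay_one (by simpa [ht0] using hray)
  · intro h n _
    have hterm : ∀ k ∈ range (n + 1), 0 ≤ (n.choose k : ℂ) * t k :=
      fun k _ => mul_nonneg (Nat.cast_nonneg _) (h k)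
    refine ⟨ne_of_gt ?_, RCLike.norm_sum_of_nonneg hterm⟩
    calc (0 : ℂ) < (n.choose 0 : ℂ) * t 0 := by simp [ht0]
      _ ≤ _ := single_le_sum hterm (mem_range.2 n.succ_pos)

/-- with t_0 = 1 and λ(n,0) ≠ 0 for all n, ζ_n^a = 0 for every n ≥ 1 iff
every t_k is a nonnegative real number. -/
theorem statement_10 (t : ℕ → ℂ) (ht0 : t 0 = 1) (hlam : ∀ n : ℕ, lam t n 0 ≠ 0) :
    (∀ n : ℕ, 1 ≤ n → zetaA t n = 0) ↔ (∀ k : ℕ, ∃ s : ℝ, 0 ≤ s ∧ t k = (s : ℂ)) :=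
  statement_10_general t ht0

end
end
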